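/- Let w : ℝ² → ℝ be continuously differentiable and 1-periodic in each variable. Then for each i ∈ {1, 2}, the interpolant satisfies ∫_{[0,1)²} |∂_i(Π_h w)(z)| dz ≤ ∫_{[0,1)²} |∂_i w(z)| dz, where ∂_i(Π_h w) denotes the (almost everywhere defined, piecewise smooth) partial derivative of Π_h w. -/

import Mathlib

/-!
On a cell `T_{k,l}` the interpolant is bilinear, so `∂₁ Π_h w = b + d x²` there: an affine
function of `x²` whose values on the lower and upper edges are the difference quotients
`(W_{k+1,l} - W_{k,l}) / h₁` and `(W_{k+1,l+1} - W_{k,l+1}) / h₁`. Since `|b + d x²|` is convex,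
the trapezoid rule bounds `∫_{T_{k,l}} |∂₁ Π_h w|` by `h₂/2` times the sum of the two nodal
differences, and periodicity in `l` gives `∫_Ω |∂₁ Π_h w| ≤ h₂ ∑_{k,l} |W_{k+1,l} - W_{k,l}|`.
Each nodal difference is the average over `ζ ∈ Q` of `w(z_{k+1,l} + ζ) - w(z_{k,l} + ζ)`, hence at
most the average of `∫ |∂₁ w|` over a horizontal segment of length `h₁`. For fixed `l` and `ζ`
these segments tile a full period in `x¹`, and as `l` and `ζ₂` vary the averages tile one period in
`x²`, which yields `∫_Ω |∂₁ w|`. The bound for `∂₂` follows by exchanging the coordinates.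
-/

open MeasureTheory Set
open scoped ENNReal NNReal

noncomputable section

/-- One period: `Ω = [0,1)²`. -/
def Omg : Set (ℝ × ℝ) := Ico (0 : ℝ) 1 ×ˢ Ico (0 : ℝ) 1

/-- `f : ℝ² → ℝ` is 1-periodic in each variable. -/
def Periodic2 (f : ℝ × ℝ → ℝ) : Prop :=
  (∀ z : ℝ × ℝ, f (z.1 + 1, z.2) = f z) ∧ ∀ z : ℝ × ℝ, f (z.1, z.2 + 1) = f z

/-- `f` coincides on `T` with a bilinear polynomial `a + b x¹ + c x² + d x¹x²`. -/
def IsBilinearOn (f : ℝ × ℝ → ℝ) (T : Set (ℝ × ℝ)) : Prop :=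
  ∃ a b c d : ℝ, ∀ z ∈ T, f z = a + b * z.1 + c * z.2 + d * (z.1 * z.2)

/-- The cell `T_{k,l} = [k h₁,(k+1)h₁] × [l h₂,(l+1)h₂]`. -/
def cell (h₁ h₂ : ℝ) (k l : ℤ) : Set (ℝ × ℝ) :=
  Icc ((k : ℝ) * h₁) (((k : ℝ) + 1) * h₁) ×ˢ Icc ((l : ℝ) * h₂) (((l : ℝ) + 1) * h₂)

/-- `Q = [-h₁/2, h₁/2] × [-h₂/2, h₂/2]`. -/
def Qset (h₁ h₂ : ℝ) : Set (ℝ × ℝ) :=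
  Icc (-(h₁ / 2)) (h₁ / 2) ×ˢ Icc (-(h₂ / 2)) (h₂ / 2)

/-- The nodal value `W_{k,l} = (1/(h₁h₂)) ∫_Q w(z_{k,l} + ζ) dζ`. -/
def nodalAvg (h₁ h₂ : ℝ) (w : ℝ × ℝ → ℝ) (k l : ℤ) : ℝ :=
  (h₁ * h₂)⁻¹ * ∫ ζ in Qset h₁ h₂, w ((k : ℝ) * h₁ + ζ.1, (l : ℝ) * h₂ + ζ.2)

/-- `Pw` is the interpolant `Π_h w`: continuous, 1-periodic in each variable,
bilinear on each cell, with nodal values `W_{k,l}`. -/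
def IsInterpolant (h₁ h₂ : ℝ) (w Pw : ℝ × ℝ → ℝ) : Prop :=
  Continuous Pw ∧ Periodic2 Pw ∧ (∀ k l : ℤ, IsBilinearOn Pw (cell h₁ h₂ k l)) ∧
    ∀ k l : ℤ, Pw ((k : ℝ) * h₁, (l : ℝ) * h₂) = nodalAvg h₁ h₂ w k l

theorem ConvexOn.intervalIntegral_le_trapezoid {f : ℝ → ℝ} {a b : ℝ} (hab : a ≤ b)
    (hf : ConvexOn ℝ (Icc a b) f) (hfc : ContinuousOn f (Icc a b)) :
    ∫ x in a..b, f x ≤ (b - a) / 2 * (f a + f b) := by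
  rcases hab.eq_or_lt with rfl | hab
  · simp
  have hba : 0 < b - a := sub_pos.2 hab
  have chord : ∀ x ∈ Icc a b, f x ≤ (b - x) / (b - a) * f a + (x - a) / (b - a) * f b := by
    intro x hx
    have hconv := hf.2 (left_mem_Icc.2 hab.le) (right_mem_Icc.2 hab.le)
      (div_nonneg (sub_nonneg.2 hx.2) hba.le) (div_nonneg (sub_nonneg.2 hx.1) hba.le)
      (by field_simp; ring)
    simp only [smul_eq_mul] at hconv
    have hx' : (b - x) / (b - a) * a + (x - a) / (b - a) * b = x := by field_simp; ring
    rwa [hx'] at hconv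
  have hlin : ∀ x, (b - x) / (b - a) * f a + (x - a) / (b - a) * f b
      = (b * f a - a * f b) / (b - a) + (f b - f a) / (b - a) * x := by
    intro x; field_simp; ring
  calc ∫ x in a..b, f x
      ≤ ∫ x in a..b, ((b * f a - a * f b) / (b - a) + (f b - f a) / (b - a) * x) := by
        refine intervalIntegral.integral_mono_on hab.le (hfc.intervalIntegrable_of_Icc hab.le)
          ((by fun_prop : Continuous _).intervalIntegrable _ _) fun x hx => ?_
        exact (chord x hx).trans_eq (hlin x)
    _ = (b - a) / 2 * (f a + f b) := by
        have hint : IntervalIntegrable (fun x : ℝ => (f b - f a) / (b - a) * x) volume a b :=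
          (continuous_const.mul continuous_id).intervalIntegrable a b
        rw [intervalIntegral.integral_add intervalIntegrable_const hint,
          intervalIntegral.integral_const, intervalIntegral.integral_const_mul, integral_id,
          smul_eq_mul]
        field_simp
        ring

theorem Function.Periodic.sum_intervalIntegral_eq {E : Type*} [NormedAddCommGroup E]
    [NormedSpace ℝ E] {f : ℝ → E} {T h : ℝ} {N : ℕ}
    (hf : Function.Periodic f T) (hfi : ∀ a b, IntervalIntegrable f volume a b)
    (hN : N * h = T) (a : ℝ) :
    ∑ k ∈ Finset.range N, ∫ x in a + k * h..a + (k + 1) * h, f x = ∫ x in 0..T, f x := by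
  have := intervalIntegral.sum_integral_adjacent_intervals (a := fun k : ℕ => a + k * h) (n := N)
    fun k _ => hfi _ _
  push_cast at this
  rw [this, zero_mul, add_zero, hN, hf.intervalIntegral_add_eq a 0, zero_add]

theorem Finset.sum_range_succ_eq_of_eq {M : Type*} [AddCancelCommMonoid M] {f : ℕ → M} {N : ℕ}
    (hf : f N = f 0) : ∑ i ∈ Finset.range N, f (i + 1) = ∑ i ∈ Finset.range N, f i := by
  apply add_right_cancel (b := f 0)
  rw [← Finset.sum_range_succ', Finset.sum_range_succ, hf]

theorem Ico_zero_one_eq_biUnion {N : ℕ} {h : ℝ} (hh : 0 < h) (hN : N * h = 1) :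
    Ico (0 : ℝ) 1 = ⋃ k ∈ Finset.range N, Ico (k * h) ((k + 1) * h) := by
  ext x
  simp only [mem_Ico, mem_iUnion, Finset.mem_range, exists_prop]
  constructor
  · rintro ⟨hx0, hx1⟩
    refine ⟨⌊x / h⌋₊, ?_, ?_, ?_⟩
    · rw [Nat.floor_lt (by positivity), div_lt_iff₀ hh, hN]
      exact hx1
    · rw [← le_div_iff₀ hh]
      exact Nat.floor_le (by positivity)
    · rw [← div_lt_iff₀ hh]
      exact Nat.lt_floor_add_one _
  · rintro ⟨k, hk, hx1, hx2⟩
    have hk' : (k : ℝ) + 1 ≤ N := by exact_mod_cast hk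
    constructor <;> nlinarith

theorem pairwise_disjoint_Ico_natCast_mul (h : ℝ) :
    Pairwise (Function.onFun Disjoint fun k : ℕ => Ico (k * h) ((k + 1) * h)) := by
  intro k l hkl
  simpa [Function.onFun, zsmul_eq_mul] using
    pairwise_disjoint_Ico_zsmul h (Nat.cast_injective.ne hkl : (k : ℤ) ≠ l)

theorem setIntegral_prod_snd {α β : Type*} [MeasurableSpace α] [MeasurableSpace β]
    {μ : Measure α} {ν : Measure β} [SFinite μ] [SFinite ν] (f : β → ℝ) (s : Set α) (t : Set β) :
    ∫ z in s ×ˢ t, f z.2 ∂μ.prod ν = μ.real s * ∫ y in t, f y ∂ν := by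
  simpa using setIntegral_prod_mul (μ := μ) (ν := ν) (fun _ => (1 : ℝ)) f s t

theorem Continuous.integrableOn_Ico_prod_Ico {f : ℝ × ℝ → ℝ} (hf : Continuous f) (a b c d : ℝ) :
    IntegrableOn f (Ico a b ×ˢ Ico c d) :=
  (hf.continuousOn.integrableOn_compact (isCompact_Icc.prod isCompact_Icc)).mono_set
    (prod_mono Ico_subset_Icc_self Ico_subset_Icc_self)

def halfOpenCell (h₁ h₂ : ℝ) (k l : ℕ) : Set (ℝ × ℝ) :=
  Ico (k * h₁) ((k + 1) * h₁) ×ˢ Ico (l * h₂) ((l + 1) * h₂)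

theorem integral_Omg_eq_sum_halfOpenCell {N₁ N₂ : ℕ} {h₁ h₂ : ℝ} (hh₁ : 0 < h₁) (hh₂ : 0 < h₂)
    (hN₁ : N₁ * h₁ = 1) (hN₂ : N₂ * h₂ = 1) {F : ℝ × ℝ → ℝ}
    (hF : ∀ k l : ℕ, IntegrableOn F (halfOpenCell h₁ h₂ k l)) :
    ∫ z in Omg, F z =
      ∑ k ∈ Finset.range N₁, ∑ l ∈ Finset.range N₂, ∫ z in halfOpenCell h₁ h₂ k l, F z := by
  have hOmg : Omg = ⋃ p ∈ Finset.range N₁ ×ˢ Finset.range N₂, halfOpenCell h₁ h₂ p.1 p.2 := by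
    ext ⟨x, y⟩
    have hx := Set.ext_iff.1 (Ico_zero_one_eq_biUnion hh₁ hN₁) x
    have hy := Set.ext_iff.1 (Ico_zero_one_eq_biUnion hh₂ hN₂) y
    simp only [Omg, halfOpenCell, mem_prod, hx, hy, mem_iUnion, Finset.mem_product, exists_prop]
    constructor
    · rintro ⟨⟨k, hk, hxk⟩, ⟨l, hl, hyl⟩⟩
      exact ⟨(k, l), ⟨hk, hl⟩, hxk, hyl⟩
    · rintro ⟨⟨k, l⟩, ⟨hk, hl⟩, hxk, hyl⟩
      exact ⟨⟨k, hk, hxk⟩, ⟨l, hl, hyl⟩⟩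
  have hdisj : (↑(Finset.range N₁ ×ˢ Finset.range N₂) : Set (ℕ × ℕ)).PairwiseDisjoint
      fun p => halfOpenCell h₁ h₂ p.1 p.2 := by
    rintro ⟨k, l⟩ - ⟨k', l'⟩ - hne
    rcases not_and_or.1 (Prod.mk_inj.not.1 hne) with hk | hl
    · exact disjoint_prod.2 (Or.inl (pairwise_disjoint_Ico_natCast_mul h₁ hk))
    · exact disjoint_prod.2 (Or.inr (pairwise_disjoint_Ico_natCast_mul h₂ hl))
  have hmeas (p : ℕ × ℕ) : MeasurableSet (halfOpenCell h₁ h₂ p.1 p.2) :=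
    measurableSet_Ico.prod measurableSet_Ico
  rw [hOmg, integral_biUnion_finset _ (fun p _ => hmeas p) hdisj fun p _ => hF p.1 p.2,
    Finset.sum_product]

theorem fderiv_add_eq_of_forall_add_eq {𝕜 E F : Type*} [NontriviallyNormedField 𝕜]
    [NormedAddCommGroup E] [NormedSpace 𝕜 E] [NormedAddCommGroup F] [NormedSpace 𝕜 F]
    {f : E → F} {v : E} (hf : ∀ z, f (z + v) = f z) (z : E) :
    fderiv 𝕜 f (z + v) = fderiv 𝕜 f z := by
  rw [← fderiv_comp_add_right, funext hf]

theorem fderiv_bilinear_apply_one_zero (a b c d : ℝ) (z : ℝ × ℝ) :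
    fderiv ℝ (fun z : ℝ × ℝ => a + b * z.1 + c * z.2 + d * (z.1 * z.2)) z (1, 0) = b + d * z.2 := by
  have hfst : HasFDerivAt (fun z : ℝ × ℝ => z.1) (ContinuousLinearMap.fst ℝ ℝ ℝ) z :=
    hasFDerivAt_fst
  have hsnd : HasFDerivAt (fun z : ℝ × ℝ => z.2) (ContinuousLinearMap.snd ℝ ℝ ℝ) z :=
    hasFDerivAt_snd
  have h : HasFDerivAt (fun z : ℝ × ℝ => a + b * z.1 + c * z.2 + d * (z.1 * z.2)) _ z :=
    (((hasFDerivAt_const a z).add (hfst.const_mul b)).add (hsnd.const_mul c)).add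
      ((hfst.mul hsnd).const_mul d)
  rw [h.fderiv]
  simp

theorem ae_restrict_fderiv_apply_one_zero_eq_of_bilinear {f : ℝ × ℝ → ℝ} {x₀ x₁ y₀ y₁ : ℝ}
    {a b c d : ℝ}
    (hf : ∀ z ∈ Icc x₀ x₁ ×ˢ Icc y₀ y₁, f z = a + b * z.1 + c * z.2 + d * (z.1 * z.2)) :
    ∀ᵐ z ∂volume.restrict (Ico x₀ x₁ ×ˢ Ico y₀ y₁), fderiv ℝ f z (1, 0) = b + d * z.2 := by
  have hR : Ico x₀ x₁ ×ˢ Ico y₀ y₁ =ᵐ[volume] Ioo x₀ x₁ ×ˢ Ioo y₀ y₁ := by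
    rw [Measure.volume_eq_prod]
    exact Measure.set_prod_ae_eq Ioo_ae_eq_Ico.symm Ioo_ae_eq_Ico.symm
  rw [Measure.restrict_congr_set hR]
  refine ae_restrict_of_forall_mem (measurableSet_Ioo.prod measurableSet_Ioo) fun z hz => ?_
  have hfz : f =ᶠ[nhds z] fun z => a + b * z.1 + c * z.2 + d * (z.1 * z.2) :=
    Filter.eventuallyEq_of_mem ((isOpen_Ioo.prod isOpen_Ioo).mem_nhds hz) fun p hp =>
      hf p (prod_mono Ioo_subset_Icc_self Ioo_subset_Icc_self hp)
  rw [hfz.fderiv_eq, fderiv_bilinear_apply_one_zero]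

theorem IsBilinearOn.integrableOn_and_setIntegral_abs_fderiv_fst_le {f : ℝ × ℝ → ℝ}
    {x₀ y₀ h₁ h₂ : ℝ} (hh₁ : 0 < h₁) (hh₂ : 0 < h₂)
    (hf : IsBilinearOn f (Icc x₀ (x₀ + h₁) ×ˢ Icc y₀ (y₀ + h₂))) :
    IntegrableOn (fun z => |fderiv ℝ f z (1, 0)|) (Ico x₀ (x₀ + h₁) ×ˢ Ico y₀ (y₀ + h₂)) ∧
      ∫ z in Ico x₀ (x₀ + h₁) ×ˢ Ico y₀ (y₀ + h₂), |fderiv ℝ f z (1, 0)| ≤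
        h₂ / 2 * (|f (x₀ + h₁, y₀) - f (x₀, y₀)| + |f (x₀ + h₁, y₀ + h₂) - f (x₀, y₀ + h₂)|) := by
  obtain ⟨a, b, c, d, hf⟩ := hf
  set R := Ico x₀ (x₀ + h₁) ×ˢ Ico y₀ (y₀ + h₂)
  have hae : ∀ᵐ z ∂volume.restrict R, |fderiv ℝ f z (1, 0)| = |b + d * z.2| :=
    (ae_restrict_fderiv_apply_one_zero_eq_of_bilinear hf).mono fun z hz => by rw [hz]
  have hcorner (y : ℝ) (hy : y ∈ Icc y₀ (y₀ + h₂)) :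
      |f (x₀ + h₁, y) - f (x₀, y)| = h₁ * |b + d * y| := by
    have hdiff : f (x₀ + h₁, y) - f (x₀, y) = h₁ * (b + d * y) := by
      rw [hf _ ⟨right_mem_Icc.2 (by linarith), hy⟩, hf _ ⟨left_mem_Icc.2 (by linarith), hy⟩]
      ring
    rw [hdiff, abs_mul, abs_of_pos hh₁]
  have hint : IntegrableOn (fun z : ℝ × ℝ => |b + d * z.2|) R :=
    (by fun_prop : Continuous fun z : ℝ × ℝ => |b + d * z.2|).integrableOn_Ico_prod_Ico _ _ _ _
  refine ⟨hint.congr_fun_ae (Filter.EventuallyEq.symm hae), ?_⟩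
  have hconv := (convexOn_univ_norm.comp_affineMap
    (AffineMap.const ℝ ℝ b + d • AffineMap.id ℝ ℝ)).subset (subset_univ (Icc y₀ (y₀ + h₂)))
    (convex_Icc _ _)
  calc ∫ z in R, |fderiv ℝ f z (1, 0)|
      = ∫ z in R, |b + d * z.2| := integral_congr_ae hae
    _ = h₁ * ∫ y in y₀..y₀ + h₂, |b + d * y| := by
        rw [Measure.volume_eq_prod, setIntegral_prod_snd (fun y => |b + d * y|),
          Real.volume_real_Ico_of_le (by linarith),
          intervalIntegral.integral_of_le (by linarith), restrict_Ico_eq_restrict_Ioc]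
        ring
    _ ≤ h₁ * (h₂ / 2 * (|b + d * y₀| + |b + d * (y₀ + h₂)|)) := by
        gcongr
        simpa using ConvexOn.intervalIntegral_le_trapezoid (by linarith) hconv
          (by fun_prop : Continuous fun y : ℝ => |b + d * y|).continuousOn
    _ = h₂ / 2 * (|f (x₀ + h₁, y₀) - f (x₀, y₀)| + |f (x₀ + h₁, y₀ + h₂) - f (x₀, y₀ + h₂)|) := by
        rw [hcorner y₀ (left_mem_Icc.2 (by linarith)), hcorner _ (right_mem_Icc.2 (by linarith))]
        ring

def rowVariation (w : ℝ × ℝ → ℝ) (y : ℝ) : ℝ :=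
  ∫ t in (0 : ℝ)..1, |fderiv ℝ w (t, y) (1, 0)|

section

variable {w : ℝ × ℝ → ℝ}

theorem continuous_rowVariation (hw : ContDiff ℝ 1 w) : Continuous (rowVariation w) := by
  have := hw.continuous_fderiv one_ne_zero
  unfold rowVariation
  fun_prop

theorem periodic_rowVariation (hper : ∀ z : ℝ × ℝ, w (z.1, z.2 + 1) = w z) :
    Function.Periodic (rowVariation w) 1 := by
  have hshift (z : ℝ × ℝ) : w (z + (0, 1)) = w z :=
    (congrArg w (Prod.ext (add_zero z.1) rfl : z + (0, 1) = (z.1, z.2 + 1))).trans (hper z)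
  intro y
  simp only [rowVariation]
  congr 1 with t
  simpa using congrArg (fun L => |L (1, 0)|)
    (fderiv_add_eq_of_forall_add_eq (𝕜 := ℝ) hshift (t, y))

theorem integral_rowVariation (hw : ContDiff ℝ 1 w) :
    ∫ y in (0 : ℝ)..1, rowVariation w y = ∫ z in Omg, |fderiv ℝ w z (1, 0)| := by
  have hint : Integrable (fun z : ℝ × ℝ => |fderiv ℝ w z (1, 0)|)
      ((volume.restrict (Ico (0 : ℝ) 1)).prod (volume.restrict (Ico (0 : ℝ) 1))) := by
    have := hw.continuous_fderiv one_ne_zero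
    rw [Measure.prod_restrict, ← Measure.volume_eq_prod]
    exact (by fun_prop : Continuous fun z : ℝ × ℝ => |fderiv ℝ w z (1, 0)|)
      |>.integrableOn_Ico_prod_Ico _ _ _ _
  rw [Omg, Measure.volume_eq_prod, ← Measure.prod_restrict, integral_prod_symm _ hint,
    intervalIntegral.integral_of_le zero_le_one, ← restrict_Ico_eq_restrict_Ioc]
  simp only [rowVariation, intervalIntegral.integral_of_le zero_le_one,
    restrict_Ico_eq_restrict_Ioc]

theorem abs_sub_le_integral_abs_fderiv_fst (hw : ContDiff ℝ 1 w) {x₁ x₂ : ℝ} (hx : x₁ ≤ x₂)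
    (y : ℝ) : |w (x₂, y) - w (x₁, y)| ≤ ∫ t in x₁..x₂, |fderiv ℝ w (t, y) (1, 0)| := by
  have hcont : Continuous fun t : ℝ => fderiv ℝ w (t, y) (1, 0) := by
    have := hw.continuous_fderiv one_ne_zero
    fun_prop
  have hderiv (t : ℝ) : HasDerivAt (fun x => w (x, y)) (fderiv ℝ w (t, y) (1, 0)) t :=
    ((hw.differentiable one_ne_zero) (t, y)).hasFDerivAt.comp_hasDerivAt t
      ((hasDerivAt_id t).prodMk (hasDerivAt_const t y))
  rw [← intervalIntegral.integral_eq_sub_of_hasDerivAt (fun t _ => hderiv t)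
    (hcont.intervalIntegrable _ _)]
  exact intervalIntegral.abs_integral_le_integral_abs hx

theorem abs_nodalAvg_succ_sub_le (hw : ContDiff ℝ 1 w) {h₁ h₂ : ℝ} (hh₁ : 0 < h₁) (hh₂ : 0 < h₂)
    (k l : ℤ) :
    |nodalAvg h₁ h₂ w (k + 1) l - nodalAvg h₁ h₂ w k l| ≤
      (h₁ * h₂)⁻¹ * ∫ ζ in Qset h₁ h₂,
        ∫ t in k * h₁..(k + 1) * h₁, |fderiv ℝ w (t + ζ.1, l * h₂ + ζ.2) (1, 0)| := by
  have hQ : IsCompact (Qset h₁ h₂) := isCompact_Icc.prod isCompact_Icc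
  have hwc := hw.continuous
  have hint (f : ℝ × ℝ → ℝ) (hf : Continuous f) : IntegrableOn f (Qset h₁ h₂) :=
    hf.continuousOn.integrableOn_compact hQ
  have hcont := hw.continuous_fderiv one_ne_zero
  rw [nodalAvg, nodalAvg, ← mul_sub, ← integral_sub (hint _ (by fun_prop)) (hint _ (by fun_prop)),
    abs_mul, abs_of_pos (by positivity)]
  gcongr
  refine (abs_integral_le_integral_abs).trans (setIntegral_mono_on (hint _ (by fun_prop))
    (hint _ (by fun_prop)) (measurableSet_Icc.prod measurableSet_Icc) fun ζ _ => ?_)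
  rw [intervalIntegral.integral_comp_add_right (fun t => |fderiv ℝ w (t, l * h₂ + ζ.2) (1, 0)|)]
  push_cast
  exact abs_sub_le_integral_abs_fderiv_fst hw (by linarith) _

theorem sum_abs_nodalAvg_succ_sub_le (hw : ContDiff ℝ 1 w)
    (hper : ∀ z : ℝ × ℝ, w (z.1 + 1, z.2) = w z) {N₁ : ℕ} {h₁ h₂ : ℝ} (hh₁ : 0 < h₁)
    (hh₂ : 0 < h₂) (hN₁ : N₁ * h₁ = 1) (l : ℤ) :
    ∑ k ∈ Finset.range N₁, |nodalAvg h₁ h₂ w (k + 1) l - nodalAvg h₁ h₂ w k l| ≤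
      h₂⁻¹ * ∫ y in l * h₂ - h₂ / 2..l * h₂ + h₂ / 2, rowVariation w y := by
  have hcont := hw.continuous_fderiv one_ne_zero
  have hshift (z : ℝ × ℝ) : w (z + (1, 0)) = w z :=
    (congrArg w (Prod.ext rfl (add_zero z.2) : z + (1, 0) = (z.1 + 1, z.2))).trans (hper z)
  have hrow (ζ : ℝ × ℝ) : ∑ k ∈ Finset.range N₁,
      ∫ t in k * h₁..(k + 1) * h₁, |fderiv ℝ w (t + ζ.1, l * h₂ + ζ.2) (1, 0)| =
        rowVariation w (l * h₂ + ζ.2) := by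
    set y := (l : ℝ) * h₂ + ζ.2
    have hper' : Function.Periodic (fun t => |fderiv ℝ w (t, y) (1, 0)|) 1 := fun t => by
      simpa using congrArg (fun L => |L (1, 0)|)
        (fderiv_add_eq_of_forall_add_eq (𝕜 := ℝ) hshift (t, y))
    have hshiftζ (k : ℕ) : ∫ t in k * h₁..(k + 1) * h₁, |fderiv ℝ w (t + ζ.1, y) (1, 0)| =
        ∫ t in ζ.1 + k * h₁..ζ.1 + (k + 1) * h₁, |fderiv ℝ w (t, y) (1, 0)| := by
      rw [intervalIntegral.integral_comp_add_right (fun t => |fderiv ℝ w (t, y) (1, 0)|),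
        add_comm _ ζ.1, add_comm _ ζ.1]
    rw [Finset.sum_congr rfl fun k _ => hshiftζ k, hper'.sum_intervalIntegral_eq
      (fun a b => (by fun_prop : Continuous _).intervalIntegrable a b) hN₁ ζ.1, rowVariation]
  have hQ : IsCompact (Qset h₁ h₂) := isCompact_Icc.prod isCompact_Icc
  calc ∑ k ∈ Finset.range N₁, |nodalAvg h₁ h₂ w (k + 1) l - nodalAvg h₁ h₂ w k l|
      ≤ ∑ k ∈ Finset.range N₁, (h₁ * h₂)⁻¹ * ∫ ζ in Qset h₁ h₂,
          ∫ t in k * h₁..(k + 1) * h₁, |fderiv ℝ w (t + ζ.1, l * h₂ + ζ.2) (1, 0)| :=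
        Finset.sum_le_sum fun k _ => by exact_mod_cast abs_nodalAvg_succ_sub_le hw hh₁ hh₂ k l
    _ = (h₁ * h₂)⁻¹ * ∫ ζ in Qset h₁ h₂, rowVariation w (l * h₂ + ζ.2) := by
        rw [← Finset.mul_sum, ← integral_finsetSum _ fun k _ =>
          (by fun_prop : Continuous _).continuousOn.integrableOn_compact hQ]
        simp only [hrow]
    _ = h₂⁻¹ * ∫ y in l * h₂ - h₂ / 2..l * h₂ + h₂ / 2, rowVariation w y := by
        rw [Qset, Measure.volume_eq_prod,
          setIntegral_prod_snd (fun s => rowVariation w (l * h₂ + s)),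
          Real.volume_real_Icc_of_le (by linarith), integral_Icc_eq_integral_Ioc,
          ← intervalIntegral.integral_of_le (by linarith),
          intervalIntegral.integral_comp_add_left (rowVariation w), ← sub_eq_add_neg]
        field_simp
        ring

theorem nodalAvg_add_natCast_snd (hper : ∀ z : ℝ × ℝ, w (z.1, z.2 + 1) = w z)
    {N₂ : ℕ} {h₁ h₂ : ℝ} (hN₂ : N₂ * h₂ = 1) (k l : ℤ) :
    nodalAvg h₁ h₂ w k (l + N₂) = nodalAvg h₁ h₂ w k l := by
  simp only [nodalAvg]
  congr 2 with ζ
  have hy : ((l + N₂ : ℤ) : ℝ) * h₂ + ζ.2 = l * h₂ + ζ.2 + 1 := by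
    push_cast
    linear_combination hN₂
  rw [hy]
  exact hper (_, _)

theorem IsInterpolant.integrableOn_and_setIntegral_halfOpenCell_le {h₁ h₂ : ℝ} (hh₁ : 0 < h₁)
    (hh₂ : 0 < h₂) {w Pw : ℝ × ℝ → ℝ} (hPw : IsInterpolant h₁ h₂ w Pw) (k l : ℕ) :
    IntegrableOn (fun z => |fderiv ℝ Pw z (1, 0)|) (halfOpenCell h₁ h₂ k l) ∧
      ∫ z in halfOpenCell h₁ h₂ k l, |fderiv ℝ Pw z (1, 0)| ≤
        h₂ / 2 * (|nodalAvg h₁ h₂ w (k + 1) l - nodalAvg h₁ h₂ w k l| +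
          |nodalAvg h₁ h₂ w (k + 1) (l + 1) - nodalAvg h₁ h₂ w k (l + 1)|) := by
  obtain ⟨-, -, hbil, hnodal⟩ := hPw
  have hnode (i j : ℤ) (x y : ℝ) (hx : (i : ℝ) * h₁ = x) (hy : (j : ℝ) * h₂ = y) :
      Pw (x, y) = nodalAvg h₁ h₂ w i j := by
    rw [← hx, ← hy, hnodal]
  have hbil' := hbil k l
  simp only [cell, Int.cast_natCast, add_one_mul] at hbil'
  have := hbil'.integrableOn_and_setIntegral_abs_fderiv_fst_le hh₁ hh₂
  rw [hnode (k + 1) l _ _ (by push_cast; ring) (by push_cast; ring),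
    hnode k l _ _ (by push_cast; ring) (by push_cast; ring),
    hnode (k + 1) (l + 1) _ _ (by push_cast; ring) (by push_cast; ring),
    hnode k (l + 1) _ _ (by push_cast; ring) (by push_cast; ring)] at this
  simpa only [halfOpenCell, add_one_mul] using this

theorem IsInterpolant.integral_abs_fderiv_fst_le {N₁ N₂ : ℕ} {h₁ h₂ : ℝ} (hh₁ : 0 < h₁)
    (hh₂ : 0 < h₂) (hN₁ : N₁ * h₁ = 1) (hN₂ : N₂ * h₂ = 1) {w Pw : ℝ × ℝ → ℝ}
    (hw : ContDiff ℝ 1 w) (hwper : Periodic2 w) (hPw : IsInterpolant h₁ h₂ w Pw) :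
    ∫ z in Omg, |fderiv ℝ Pw z (1, 0)| ≤ ∫ z in Omg, |fderiv ℝ w z (1, 0)| := by
  have hcell := hPw.integrableOn_and_setIntegral_halfOpenCell_le hh₁ hh₂
  set G : ℤ → ℤ → ℝ := fun k l => |nodalAvg h₁ h₂ w (k + 1) l - nodalAvg h₁ h₂ w k l|
  have hG (k : ℕ) : ∑ l ∈ Finset.range N₂, G k (l + 1) = ∑ l ∈ Finset.range N₂, G k l := by
    refine Finset.sum_range_succ_eq_of_eq (f := fun l : ℕ => G k l) ?_
    simpa [G] using (congrArg₂ (fun a b => |a - b|) (nodalAvg_add_natCast_snd hwper.2 hN₂ (k + 1) 0)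
      (nodalAvg_add_natCast_snd hwper.2 hN₂ k 0))
  have hcol : ∑ l ∈ Finset.range N₂, ∫ y in l * h₂ - h₂ / 2..l * h₂ + h₂ / 2, rowVariation w y =
      ∫ y in (0 : ℝ)..1, rowVariation w y := by
    rw [← (periodic_rowVariation hwper.2).sum_intervalIntegral_eq
      (fun a b => (continuous_rowVariation hw).intervalIntegrable a b) hN₂ (-(h₂ / 2))]
    congr! 2 <;> ring
  calc ∫ z in Omg, |fderiv ℝ Pw z (1, 0)|
      = ∑ k ∈ Finset.range N₁, ∑ l ∈ Finset.range N₂,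
          ∫ z in halfOpenCell h₁ h₂ k l, |fderiv ℝ Pw z (1, 0)| :=
        integral_Omg_eq_sum_halfOpenCell hh₁ hh₂ hN₁ hN₂ fun k l => (hcell k l).1
    _ ≤ ∑ k ∈ Finset.range N₁, ∑ l ∈ Finset.range N₂, h₂ / 2 * (G k l + G k (l + 1)) := by
        gcongr with k _ l _
        exact (hcell k l).2
    _ = h₂ * ∑ l ∈ Finset.range N₂, ∑ k ∈ Finset.range N₁, G k l := by
        simp only [← Finset.mul_sum, Finset.sum_add_distrib, hG]
        rw [Finset.sum_comm]
        ring
    _ ≤ h₂ * ∑ l ∈ Finset.range N₂,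
          h₂⁻¹ * ∫ y in l * h₂ - h₂ / 2..l * h₂ + h₂ / 2, rowVariation w y := by
        gcongr with l _
        exact_mod_cast sum_abs_nodalAvg_succ_sub_le hw hwper.1 hh₁ hh₂ hN₁ l
    _ = ∫ z in Omg, |fderiv ℝ w z (1, 0)| := by
        rw [Finset.mul_sum]
        simp only [← mul_assoc, mul_inv_cancel₀ hh₂.ne', one_mul]
        rw [hcol, integral_rowVariation hw]

theorem fderiv_comp_swap_apply (f : ℝ × ℝ → ℝ) (z v : ℝ × ℝ) :
    fderiv ℝ (f ∘ Prod.swap) z v = fderiv ℝ f z.swap v.swap := by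
  rw [show f ∘ Prod.swap = f ∘ ContinuousLinearEquiv.prodComm ℝ ℝ ℝ from rfl,
    ContinuousLinearEquiv.comp_right_fderiv]
  rfl

theorem setIntegral_Omg_comp_swap (f : ℝ × ℝ → ℝ) : ∫ z in Omg, f z.swap = ∫ z in Omg, f z := by
  rw [Omg, Measure.volume_eq_prod, setIntegral_prod_swap]

theorem Periodic2.comp_swap {w : ℝ × ℝ → ℝ} (hw : Periodic2 w) : Periodic2 (w ∘ Prod.swap) :=
  ⟨fun z => hw.2 z.swap, fun z => hw.1 z.swap⟩

theorem nodalAvg_comp_swap (h₁ h₂ : ℝ) (w : ℝ × ℝ → ℝ) (k l : ℤ) :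
    nodalAvg h₂ h₁ (w ∘ Prod.swap) k l = nodalAvg h₁ h₂ w l k := by
  rw [nodalAvg, nodalAvg, mul_comm h₂, Qset, Qset, Measure.volume_eq_prod,
    ← setIntegral_prod_swap]
  rfl

theorem IsInterpolant.comp_swap {h₁ h₂ : ℝ} {w Pw : ℝ × ℝ → ℝ} (hPw : IsInterpolant h₁ h₂ w Pw) :
    IsInterpolant h₂ h₁ (w ∘ Prod.swap) (Pw ∘ Prod.swap) := by
  obtain ⟨hcont, hper, hbil, hnodal⟩ := hPw
  refine ⟨hcont.comp continuous_swap, hper.comp_swap, fun k l => ?_, fun k l => ?_⟩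
  · obtain ⟨a, b, c, d, hbil⟩ := hbil l k
    refine ⟨a, c, b, d, fun z hz => ?_⟩
    rw [Function.comp_apply, hbil z.swap ⟨hz.2, hz.1⟩, Prod.fst_swap, Prod.snd_swap]
    ring
  · rw [nodalAvg_comp_swap, ← hnodal]
    rfl

/-- `Π_h` does not increase each directional total variation,
for `C¹` periodic functions. -/
theorem stmt4 (N₁ N₂ : ℕ) (hN₁ : 0 < N₁) (hN₂ : 0 < N₂) (h₁ h₂ : ℝ)
    (hh₁ : h₁ = 1 / N₁) (hh₂ : h₂ = 1 / N₂)
    (w : ℝ × ℝ → ℝ) (hw : ContDiff ℝ 1 w) (hwper : Periodic2 w)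
    (Pw : ℝ × ℝ → ℝ) (hPw : IsInterpolant h₁ h₂ w Pw) :
    ((∫ z in Omg, |fderiv ℝ Pw z (1, 0)|) ≤ ∫ z in Omg, |fderiv ℝ w z (1, 0)|) ∧
      (∫ z in Omg, |fderiv ℝ Pw z (0, 1)|) ≤ ∫ z in Omg, |fderiv ℝ w z (0, 1)| := by
  have hN₁' : (0 : ℝ) < N₁ := Nat.cast_pos.2 hN₁
  have hN₂' : (0 : ℝ) < N₂ := Nat.cast_pos.2 hN₂
  have hh₁pos : 0 < h₁ := hh₁ ▸ one_div_pos.2 hN₁'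
  have hh₂pos : 0 < h₂ := hh₂ ▸ one_div_pos.2 hN₂'
  have hN₁h₁ : (N₁ : ℝ) * h₁ = 1 := by rw [hh₁, mul_one_div_cancel hN₁'.ne']
  have hN₂h₂ : (N₂ : ℝ) * h₂ = 1 := by rw [hh₂, mul_one_div_cancel hN₂'.ne']
  refine ⟨hPw.integral_abs_fderiv_fst_le hh₁pos hh₂pos hN₁h₁ hN₂h₂ hw hwper, ?_⟩
  have hwswap : ContDiff ℝ 1 (w ∘ Prod.swap) :=
    hw.comp (ContinuousLinearEquiv.prodComm ℝ ℝ ℝ).contDiff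
  have hswap := hPw.comp_swap.integral_abs_fderiv_fst_le hh₂pos hh₁pos hN₂h₂ hN₁h₁ hwswap
    hwper.comp_swap
  simp only [fderiv_comp_swap_apply, Prod.swap_prod_mk] at hswap
  rwa [setIntegral_Omg_comp_swap fun z => |fderiv ℝ Pw z (0, 1)|,
    setIntegral_Omg_comp_swap fun z => |fderiv ℝ w z (0, 1)|] at hswap
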